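/- Define $H(\xi) = \int_0^{\xi^2} K(\sqrt{s})\,ds$ for $\xi \ge 0$. Then for all $\xi \ge 0$, $K(\xi)\,\xi^2 \le H(\xi) \le 2\,K(\xi)\,\xi^2$. -/

import Mathlib

/-!
Since `g` is positive and increasing, `x ↦ x g(x)` is strictly increasing, so `s` is monotone;
hence `K = 1 / g ∘ s` is antitone while `ξ ↦ K(ξ) ξ = s(ξ)` is monotone. The first fact gives
`K(√t) ≥ K(ξ)` on `[0, ξ²]`, hence the lower bound; the second gives `K(√t) ≤ K(ξ) ξ / √t`, and
`∫₀^{ξ²} t^{-1/2} dt = 2ξ` yields the upper bound.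
-/

open Set Real intervalIntegral

lemma integral_rpow_neg_half_sq {x : ℝ} (hx : 0 ≤ x) :
    ∫ t in (0 : ℝ)..x ^ 2, t ^ (-(1 / 2) : ℝ) = 2 * x := by
  rw [integral_rpow (Or.inl (by norm_num)), zero_rpow (by norm_num),
    show (-(1 / 2) : ℝ) + 1 = 1 / 2 by norm_num, ← sqrt_eq_rpow, sqrt_sq hx]
  ring

theorem integral_comp_sqrt_bounds {K : ℝ → ℝ} (hK : AntitoneOn K (Ici 0))
    (hKid : MonotoneOn (fun x => K x * x) (Ici 0)) {ξ : ℝ} (hξ : 0 ≤ ξ) :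
    K ξ * ξ ^ 2 ≤ ∫ t in (0 : ℝ)..ξ ^ 2, K √t ∧
      ∫ t in (0 : ℝ)..ξ ^ 2, K √t ≤ 2 * (K ξ * ξ ^ 2) := by
  have hsqrt_le : ∀ t, t ≤ ξ ^ 2 → √t ≤ ξ := fun t ht => (sqrt_le_left hξ).2 ht
  have hint : IntervalIntegrable (fun t => K √t) MeasureTheory.volume 0 (ξ ^ 2) := by
    refine AntitoneOn.intervalIntegrable fun x _ y _ hxy => ?_
    exact hK (sqrt_nonneg x) (sqrt_nonneg y) (sqrt_le_sqrt hxy)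
  constructor
  · calc K ξ * ξ ^ 2 = ∫ _ in (0 : ℝ)..ξ ^ 2, K ξ := by simp [mul_comm]
      _ ≤ ∫ t in (0 : ℝ)..ξ ^ 2, K √t :=
        integral_mono_on (sq_nonneg ξ) intervalIntegrable_const hint fun t ht =>
          hK (sqrt_nonneg t) hξ (hsqrt_le t ht.2)
  · have hpoint : ∀ t ∈ Ioo 0 (ξ ^ 2), K √t ≤ K ξ * ξ * t ^ (-(1 / 2) : ℝ) := by
      rintro t ⟨ht0, htξ⟩
      have hsqrt_pos : 0 < √t := sqrt_pos.2 ht0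
      rw [rpow_neg ht0.le, ← sqrt_eq_rpow, le_mul_inv_iff₀ hsqrt_pos]
      exact hKid (sqrt_nonneg t) hξ (hsqrt_le t htξ.le)
    calc ∫ t in (0 : ℝ)..ξ ^ 2, K √t ≤ ∫ t in (0 : ℝ)..ξ ^ 2, K ξ * ξ * t ^ (-(1 / 2) : ℝ) :=
          integral_mono_on_of_le_Ioo (sq_nonneg ξ) hint
            ((intervalIntegrable_rpow' (by norm_num)).const_mul _) hpoint
      _ = 2 * (K ξ * ξ ^ 2) := by
        rw [integral_const_mul, integral_rpow_neg_half_sq hξ]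
        ring

section GeneralizedPolynomial

variable {ι : Type*} [Fintype ι] {c α : ι → ℝ}

lemma monotoneOn_sum_mul_rpow (hc : ∀ i, 0 ≤ c i) (hα : ∀ i, 0 ≤ α i) :
    MonotoneOn (fun x => ∑ i, c i * x ^ α i) (Ici 0) := fun _ hx _ _ hxy =>
  Finset.sum_le_sum fun i _ => mul_le_mul_of_nonneg_left (rpow_le_rpow hx hxy (hα i)) (hc i)

lemma le_sum_mul_rpow (hc : ∀ i, 0 ≤ c i) {i₀ : ι} (hα : α i₀ = 0) {x : ℝ} (hx : 0 ≤ x) :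
    c i₀ ≤ ∑ i, c i * x ^ α i := by
  simpa [hα] using Finset.single_le_sum (fun i _ => mul_nonneg (hc i) (rpow_nonneg hx (α i)))
    (Finset.mem_univ i₀)

end GeneralizedPolynomial

section InverseOfMulSelf

variable {g s : ℝ → ℝ} (hg_pos : ∀ x, 0 ≤ x → 0 < g x)
  (hs : ∀ ξ, 0 ≤ ξ → 0 ≤ s ξ ∧ s ξ * g (s ξ) = ξ)
include hg_pos hs

lemma one_div_comp_mul_eq_of_mul_self_eq {ξ : ℝ} (hξ : 0 ≤ ξ) : 1 / g (s ξ) * ξ = s ξ := by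
  rw [div_mul_eq_mul_div, one_mul, div_eq_iff (hg_pos _ (hs ξ hξ).1).ne']
  exact (hs ξ hξ).2.symm

variable (hg : MonotoneOn g (Ici 0))
include hg

lemma monotoneOn_of_mul_self_eq : MonotoneOn s (Ici 0) := by
  have hmul : StrictMonoOn (fun x => x * g x) (Ici 0) := fun x hx y hy hxy =>
    mul_lt_mul hxy (hg hx hy hxy.le) (hg_pos x hx) hy
  intro ξ₁ hξ₁ ξ₂ hξ₂ hξ
  rw [← hmul.le_iff_le (hs ξ₁ hξ₁).1 (hs ξ₂ hξ₂).1]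
  simpa only [(hs ξ₁ hξ₁).2, (hs ξ₂ hξ₂).2] using hξ

lemma antitoneOn_one_div_comp_of_mul_self_eq : AntitoneOn (fun ξ => 1 / g (s ξ)) (Ici 0) :=
  fun _ hξ₁ _ hξ₂ hξ => one_div_le_one_div_of_le (hg_pos _ (hs _ hξ₁).1)
    (hg (hs _ hξ₁).1 (hs _ hξ₂).1 (monotoneOn_of_mul_self_eq hg_pos hs hg hξ₁ hξ₂ hξ))

end InverseOfMulSelf

theorem stmt7_general
    (N : ℕ)
    (α : Fin (N + 1) → ℝ) (hα0 : α 0 = 0) (hαmono : StrictMono α)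
    (c : Fin (N + 1) → ℝ) (hc : ∀ i, 0 ≤ c i) (hc0 : 0 < c 0)
    (g : ℝ → ℝ) (hg : ∀ s : ℝ, 0 ≤ s → g s = ∑ i, c i * s ^ (α i))
    (sfun : ℝ → ℝ)
    (hsfun : ∀ ξ : ℝ, 0 ≤ ξ → 0 ≤ sfun ξ ∧ sfun ξ * g (sfun ξ) = ξ)
    (K : ℝ → ℝ) (hK : ∀ ξ : ℝ, 0 ≤ ξ → K ξ = 1 / g (sfun ξ))
    (H : ℝ → ℝ) (hH : ∀ ξ : ℝ, 0 ≤ ξ → H ξ = ∫ t in (0:ℝ)..(ξ ^ 2), K (Real.sqrt t)) :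
    ∀ ξ : ℝ, 0 ≤ ξ → K ξ * ξ ^ 2 ≤ H ξ ∧ H ξ ≤ 2 * (K ξ * ξ ^ 2) := by
  have hα : ∀ i, 0 ≤ α i := fun i => hα0 ▸ hαmono.monotone (Fin.zero_le i)
  have hg_pos : ∀ x, 0 ≤ x → 0 < g x := fun x hx =>
    hc0.trans_le (hg x hx ▸ le_sum_mul_rpow hc hα0 hx)
  have hg_mono : MonotoneOn g (Ici 0) :=
    (monotoneOn_sum_mul_rpow hc hα).congr fun x hx => (hg x hx).symm
  have hK_eq : EqOn (fun ξ => 1 / g (sfun ξ)) K (Ici 0) := fun ξ hξ => (hK ξ hξ).symm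
  have hK_anti : AntitoneOn K (Ici 0) :=
    (antitoneOn_one_div_comp_of_mul_self_eq hg_pos hsfun hg_mono).congr hK_eq
  have hK_mul : MonotoneOn (fun ξ => K ξ * ξ) (Ici 0) :=
    (monotoneOn_of_mul_self_eq hg_pos hsfun hg_mono).congr fun ξ hξ => by
      simp only [← hK_eq hξ, one_div_comp_mul_eq_of_mul_self_eq hg_pos hsfun hξ]
  intro ξ hξ
  rw [hH ξ hξ]
  exact integral_comp_sqrt_bounds hK_anti hK_mul hξ

/-- With `H(ξ) = ∫_0^{ξ²} K(√s) ds` for `ξ ≥ 0`, one has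
`K(ξ) ξ² ≤ H(ξ) ≤ 2 K(ξ) ξ²` for all `ξ ≥ 0`. -/
theorem stmt7
    (N : ℕ) (hN : 1 ≤ N)
    (α : Fin (N + 1) → ℝ) (hα0 : α 0 = 0) (hαmono : StrictMono α)
    (c : Fin (N + 1) → ℝ) (hc : ∀ i, 0 ≤ c i) (hc0 : 0 < c 0) (hcN : 0 < c (Fin.last N))
    (g : ℝ → ℝ) (hg : ∀ s : ℝ, 0 ≤ s → g s = ∑ i, c i * s ^ (α i))
    (sfun : ℝ → ℝ)
    (hsfun : ∀ ξ : ℝ, 0 ≤ ξ → 0 ≤ sfun ξ ∧ sfun ξ * g (sfun ξ) = ξ)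
    (K : ℝ → ℝ) (hK : ∀ ξ : ℝ, 0 ≤ ξ → K ξ = 1 / g (sfun ξ))
    (H : ℝ → ℝ) (hH : ∀ ξ : ℝ, 0 ≤ ξ → H ξ = ∫ t in (0:ℝ)..(ξ ^ 2), K (Real.sqrt t)) :
    ∀ ξ : ℝ, 0 ≤ ξ → K ξ * ξ ^ 2 ≤ H ξ ∧ H ξ ≤ 2 * (K ξ * ξ ^ 2) :=
  stmt7_general N α hα0 hαmono c hc hc0 g hg sfun hsfun K hK H hH
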